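/- arXiv:1007.0822 — 4 statements merged into one kernel-verified Lean document; each statement's English description precedes it below -/
import Mathlib

section
/- A subset B ⊆ {l,r}* has an infinite antichain if and only if there exists an infinite branch, i.e., an infinite sequence of words ε = u_0 ⊑ u_1 ⊑ u_2 ⊑ … with u_{n+1} an immediate successor of u_n (obtained by appending one letter), together with infinitely many indices n_i such that u_{n_i}·a is a prefix of some v_i ∈ B for some letter a ∈ {l,r}, while u_{n_i+1} = u_{n_i}·b with b ≠ a. -/
/-!
An infinite antichain `A` gives, by König's lemma, a branch `u` such that infinitely many
words of `A` extend every `u n`. If the branch turned away from `B` only finitely often, then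
beyond some `u N` every word of `B` extending `u N` would lie on the branch itself, so the
infinitely many words of `A` above `u N` would be pairwise comparable. Conversely, the words
of `B` witnessing the turns of a branch are pairwise incomparable: the word chosen at a turn
`n` extends `u n ++ [a]`, whereas every later one extends `u (n + 1) = u n ++ [b]` with `b ≠ a`.
-/

/-- An antichain for the prefix order on finite binary words. -/
def IsAnti (A : Set (List Bool)) : Prop :=
  ∀ x ∈ A, ∀ y ∈ A, x ≠ y → ¬ x <+: y ∧ ¬ y <+: x

/-- `B` contains an infinite antichain for the prefix order. -/
def HasInfAnti (B : Set (List Bool)) : Prop :=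
  ∃ A : Set (List Bool), A ⊆ B ∧ A.Infinite ∧ IsAnti A

open Filter

variable {α : Type*}

theorem not_prefix_of_prefix_append_singleton {t x y : List α} {a b : α} (hab : a ≠ b)
    (hx : t ++ [a] <+: x) (hy : t ++ [b] <+: y) : ¬ x <+: y := by
  intro hxy
  have hlen : (t ++ [a]).length = (t ++ [b]).length := by simp
  have := (List.prefix_of_prefix_length_le (hx.trans hxy) hy hlen.le).eq_of_length hlen
  simp_all

theorem incomparable_of_prefix_append_singleton {t x y : List α} {a b : α} (hab : a ≠ b)
    (hx : t ++ [a] <+: x) (hy : t ++ [b] <+: y) : ¬ x <+: y ∧ ¬ y <+: x :=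
  ⟨not_prefix_of_prefix_append_singleton hab hx hy,
    not_prefix_of_prefix_append_singleton hab.symm hy hx⟩

theorem infinite_prefix_append_singleton [Finite α] {A : Set (List α)} {t : List α}
    (h : {v ∈ A | t <+: v}.Infinite) : ∃ a, {v ∈ A | t ++ [a] <+: v}.Infinite := by
  by_contra! hfin
  refine h (((Set.finite_iUnion hfin).insert t).subset ?_)
  rintro _ ⟨hv, s, rfl⟩
  cases s with
  | nil => simp
  | cons a s => exact Or.inr (Set.mem_iUnion.2 ⟨a, hv, s, by simp⟩)

theorem exists_branch_of_forall_exists_append (P : List α → Prop) (h0 : P [])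
    (h : ∀ t, P t → ∃ a, P (t ++ [a])) :
    ∃ u : ℕ → List α, u 0 = [] ∧ (∀ n, ∃ a, u (n + 1) = u n ++ [a]) ∧ ∀ n, P (u n) := by
  choose f hf using fun t : {t // P t} => h t.1 t.2
  let g : ℕ → {t // P t} := fun n => Nat.rec ⟨[], h0⟩ (fun _ t => ⟨t.1 ++ [f t], hf t⟩) n
  exact ⟨fun n => (g n).1, rfl, fun n => ⟨f (g n), rfl⟩, fun n => (g n).2⟩

theorem exists_branch_forall_infinite_prefix [Finite α] {A : Set (List α)} (hA : A.Infinite) :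
    ∃ u : ℕ → List α, u 0 = [] ∧ (∀ n, ∃ a, u (n + 1) = u n ++ [a]) ∧
      ∀ n, {v ∈ A | u n <+: v}.Infinite :=
  exists_branch_of_forall_exists_append (fun t => {v ∈ A | t <+: v}.Infinite) (by simpa using hA)
    fun _ ht => infinite_prefix_append_singleton ht

def SwitchesAt (B : Set (List α)) (u : ℕ → List α) (n : ℕ) : Prop :=
  ∃ a, (∃ v ∈ B, u n ++ [a] <+: v) ∧ u (n + 1) ≠ u n ++ [a]

theorem prefix_of_le_of_succ_eq_append {u : ℕ → List α} (hu : ∀ n, ∃ a, u (n + 1) = u n ++ [a])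
    {m n : ℕ} (hmn : m ≤ n) : u m <+: u n :=
  Nat.rel_of_forall_rel_succ_of_le (· <+: ·)
    (fun n => by obtain ⟨a, ha⟩ := hu n; exact ha ▸ List.prefix_append _ _) hmn

theorem incomparable_of_switch {u : ℕ → List α} (hu : ∀ n, ∃ a, u (n + 1) = u n ++ [a])
    {m n : ℕ} {a : α} {x y : List α} (hmn : m < n)
    (hx : u m ++ [a] <+: x) (hm : u (m + 1) ≠ u m ++ [a]) (hy : u n <+: y) :
    ¬ x <+: y ∧ ¬ y <+: x := by
  obtain ⟨b, hb⟩ := hu m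
  refine incomparable_of_prefix_append_singleton (b := b) (by rintro rfl; exact hm hb) hx ?_
  exact hb ▸ (prefix_of_le_of_succ_eq_append hu hmn).trans hy

theorem exists_eq_of_forall_not_switchesAt {B : Set (List α)} {u : ℕ → List α} {N : ℕ}
    (hN : ∀ n ≥ N, ¬ SwitchesAt B u n) {v : List α} (hv : v ∈ B) (hNv : u N <+: v) :
    ∃ m, v = u m := by
  induction h : v.length - (u N).length generalizing N with
  | zero => exact ⟨N, (hNv.eq_of_length (by have := hNv.length_le; omega)).symm⟩
  | succ k ih =>
    obtain ⟨s, rfl⟩ := hNv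
    cases s with
    | nil => simp at h
    | cons a s =>
      have hstep : u (N + 1) = u N ++ [a] :=
        not_not.1 fun hne => hN N le_rfl ⟨a, ⟨_, hv, by simp⟩, hne⟩
      exact ih (N := N + 1) (fun n hn => hN n (by omega)) ⟨s, by simp [hstep]⟩
        (by simp [hstep] at h ⊢; omega)

theorem hasInfAnti_of_pairwise_incomparable {B : Set (List Bool)} {S : Set ℕ} (hS : S.Infinite)
    {f : ℕ → List Bool} (hfB : Set.MapsTo f S B)
    (hf : ∀ m ∈ S, ∀ n ∈ S, m < n → ¬ f m <+: f n ∧ ¬ f n <+: f m) : HasInfAnti B := by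
  have hf' : ∀ m ∈ S, ∀ n ∈ S, m ≠ n → ¬ f m <+: f n ∧ ¬ f n <+: f m := by
    intro m hm n hn hmn
    rcases hmn.lt_or_gt with h | h
    · exact hf m hm n hn h
    · exact (hf n hn m hm h).symm
  refine ⟨f '' S, hfB.image_subset, hS.image fun m hm n hn hmn => ?_, ?_⟩
  · by_contra hne
    exact (hf' m hm n hn hne).1 (hmn ▸ List.prefix_refl _)
  · rintro _ ⟨m, hm, rfl⟩ _ ⟨n, hn, rfl⟩ hmn
    exact hf' m hm n hn (ne_of_apply_ne f hmn)

theorem hasInfAnti_of_frequently_switchesAt {B : Set (List Bool)} {u : ℕ → List Bool}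
    (hu : ∀ n, ∃ a, u (n + 1) = u n ++ [a]) (h : ∃ᶠ n in atTop, SwitchesAt B u n) :
    HasInfAnti B := by
  rw [Nat.frequently_atTop_iff_infinite] at h
  choose! a hex hne using fun n (hn : SwitchesAt B u n) => hn
  choose! v hvB hav using hex
  refine hasInfAnti_of_pairwise_incomparable h hvB fun m hm n hn hmn => ?_
  exact incomparable_of_switch hu hmn (hav m hm) (hne m hm)
    ((List.prefix_append _ _).trans (hav n hn))

theorem exists_branch_frequently_switchesAt {B : Set (List Bool)} (hB : HasInfAnti B) :
    ∃ u : ℕ → List Bool, u 0 = [] ∧ (∀ n, ∃ a, u (n + 1) = u n ++ [a]) ∧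
      ∃ᶠ n in atTop, SwitchesAt B u n := by
  obtain ⟨A, hAB, hA, hanti⟩ := hB
  obtain ⟨u, h0, hu, hinf⟩ := exists_branch_forall_infinite_prefix hA
  refine ⟨u, h0, hu, fun hfin => ?_⟩
  obtain ⟨N, hN⟩ := eventually_atTop.1 hfin
  obtain ⟨v, ⟨hvA, hNv⟩, w, ⟨hwA, hNw⟩, hvw⟩ := (hinf N).nontrivial
  obtain ⟨m, rfl⟩ := exists_eq_of_forall_not_switchesAt hN (hAB hvA) hNv
  obtain ⟨n, rfl⟩ := exists_eq_of_forall_not_switchesAt hN (hAB hwA) hNw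
  rcases le_total m n with hmn | hnm
  · exact (hanti _ hvA _ hwA hvw).1 (prefix_of_le_of_succ_eq_append hu hmn)
  · exact (hanti _ hvA _ hwA hvw).2 (prefix_of_le_of_succ_eq_append hu hnm)

theorem switchesAt_iff_eq_not {B : Set (List Bool)} {u : ℕ → List Bool}
    (hu : ∀ n, ∃ a, u (n + 1) = u n ++ [a]) (n : ℕ) :
    SwitchesAt B u n ↔ ∃ a : Bool, (∃ v ∈ B, u n ++ [a] <+: v) ∧ u (n + 1) = u n ++ [!a] := by
  obtain ⟨b, hb⟩ := hu n
  simp only [SwitchesAt, hb, ne_eq, List.append_cancel_left_eq, List.cons.injEq, and_true,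
    ← Bool.eq_not]

/-- `B ⊆ {l,r}*` has an infinite antichain iff there is an infinite branch
`ε = u_0 ⊑ u_1 ⊑ …` (each `u_{n+1}` obtained from `u_n` by appending one letter)
together with infinitely many indices `n` such that `u_n·a` is a prefix of some
`v ∈ B` for some letter `a`, while `u_{n+1} = u_n·b` with `b ≠ a`. -/
theorem hasInfAnti_iff_branch (B : Set (List Bool)) :
    HasInfAnti B ↔
      ∃ u : ℕ → List Bool, u 0 = [] ∧ (∀ n, ∃ a : Bool, u (n + 1) = u n ++ [a]) ∧
        ∀ N : ℕ, ∃ n ≥ N, ∃ a : Bool, (∃ v ∈ B, (u n ++ [a]) <+: v) ∧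
          u (n + 1) = u n ++ [!a] := by
  constructor
  · intro hB
    obtain ⟨u, h0, hu, hsw⟩ := exists_branch_frequently_switchesAt hB
    refine ⟨u, h0, hu, fun N => ?_⟩
    obtain ⟨n, hn, hs⟩ := frequently_atTop.1 hsw N
    exact ⟨n, hn, (switchesAt_iff_eq_not hu n).1 hs⟩
  · rintro ⟨u, -, hu, hsw⟩
    refine hasInfAnti_of_frequently_switchesAt hu (frequently_atTop.2 fun N => ?_)
    obtain ⟨n, hn, hs⟩ := hsw N
    exact ⟨n, hn, (switchesAt_iff_eq_not hu n).2 hs⟩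
end

section
/- A subset B ⊆ {l,r}* has no infinite antichain if and only if there exists a natural number k such that every antichain contained in B has cardinality at most k. -/
open Set

variable {α : Type*}

theorem List.eq_or_append_singleton_prefix_of_prefix {w x : List α} (h : w <+: x) :
    x = w ∨ ∃ a, w ++ [a] <+: x := by
  obtain ⟨t, rfl⟩ := h
  cases t with
  | nil => exact .inl (List.append_nil w)
  | cons a t => exact .inr ⟨a, t, by simp⟩

def HasLargeAntichains (S : Set (List α)) : Prop :=
  ∀ n : ℕ, ∃ A : Finset (List α), ↑A ⊆ S ∧ IsAntichain (· <+: ·) (A : Set (List α)) ∧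
    n ≤ A.card

namespace HasLargeAntichains

variable {S : Set (List α)}

theorem exists_child [Fintype α] {w : List α} (h : HasLargeAntichains {x ∈ S | w <+: x}) :
    ∃ a, HasLargeAntichains {x ∈ S | w ++ [a] <+: x} := by
  classical
  by_contra! hsmall
  simp only [HasLargeAntichains, not_forall, not_exists, not_and, not_le] at hsmall
  choose n hn using hsmall
  obtain ⟨A, hAS, hA, hcard⟩ := h (∑ a, n a + 2)
  let child (a : α) : Finset (List α) := A.filter (w ++ [a] <+: ·)
  have hcover : A ⊆ insert w (Finset.univ.biUnion child) := by
    intro x hx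
    rcases List.eq_or_append_singleton_prefix_of_prefix (hAS hx).2 with rfl | ⟨a, ha⟩
    · exact Finset.mem_insert_self _ _
    · exact Finset.mem_insert_of_mem
        (Finset.mem_biUnion.2 ⟨a, Finset.mem_univ _, Finset.mem_filter.2 ⟨hx, ha⟩⟩)
  have hchild (a : α) : (child a).card < n a := by
    refine hn a _ (fun x hx => ?_) (hA.subset fun x hx => (Finset.mem_filter.1 hx).1)
    obtain ⟨hxA, hax⟩ := Finset.mem_filter.1 hx
    exact ⟨(hAS hxA).1, hax⟩
  have : A.card ≤ ∑ a, n a + 1 := calc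
    A.card ≤ (insert w (Finset.univ.biUnion child)).card := Finset.card_le_card hcover
    _ ≤ (Finset.univ.biUnion child).card + 1 := Finset.card_insert_le _ _
    _ ≤ ∑ a, (child a).card + 1 := by gcongr; exact Finset.card_biUnion_le
    _ ≤ ∑ a, n a + 1 := by gcongr with a; exact (hchild a).le
  omega

theorem exists_branch [Fintype α] (h : HasLargeAntichains S) :
    ∃ p : ℕ → List α, (∀ n, (p n).length = n) ∧ (∀ m n, m ≤ n → p m <+: p n) ∧
      ∀ n, HasLargeAntichains {x ∈ S | p n <+: x} := by
  let Node := {w : List α // HasLargeAntichains {x ∈ S | w <+: x}}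
  choose a ha using fun w : Node => exists_child w.2
  let next (w : Node) : Node := ⟨w.1 ++ [a w], ha w⟩
  let root : Node := ⟨[], by simpa using h⟩
  have hsucc (n : ℕ) : (next^[n + 1] root).1 = (next^[n] root).1 ++ [a _] :=
    congrArg Subtype.val (Function.iterate_succ_apply' next n root)
  refine ⟨fun n => (next^[n] root).1, fun n => ?_, fun m n hmn => ?_, fun n => (next^[n] root).2⟩
  · induction n with
    | zero => rfl
    | succ n ih =>
      beta_reduce at ih ⊢
      rw [hsucc, List.length_append, ih, List.length_singleton]
  · induction n, hmn using Nat.le_induction with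
    | base => exact List.prefix_refl _
    | succ n _ ih =>
      beta_reduce at ih ⊢
      rw [hsucc]
      exact ih.trans (List.prefix_append _ _)

end HasLargeAntichains

section Branch

variable {p : ℕ → List α}

theorem HasLargeAntichains.exists_forall_not_prefix (hmono : ∀ m n, m ≤ n → p m <+: p n)
    {T : Set (List α)} (h : HasLargeAntichains T) : ∃ x ∈ T, ∀ m, ¬ x <+: p m := by
  obtain ⟨A, hAT, hA, hcard⟩ := h 2
  obtain ⟨y, hy, z, hz, hyz⟩ := Finset.one_lt_card.1 hcard
  by_contra! hon
  obtain ⟨i, hi⟩ := hon y (hAT hy)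
  obtain ⟨j, hj⟩ := hon z (hAT hz)
  rcases List.prefix_or_prefix_of_prefix (hi.trans (hmono i _ (le_max_left i j)))
      (hj.trans (hmono j _ (le_max_right i j))) with hyz' | hzy
  · exact hA hy hz hyz hyz'
  · exact hA hz hy hyz.symm hzy

theorem not_prefix_and_not_prefix_of_forall_not_prefix (hlen : ∀ n, (p n).length = n)
    {x y : List α} {n : ℕ} (hx : ∀ m, ¬ x <+: p m) (hy : p n <+: y) (hxn : x.length < n) :
    ¬ x <+: y ∧ ¬ y <+: x := by
  constructor
  · intro hxy
    rcases List.prefix_or_prefix_of_prefix hxy hy with hxp | hpx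
    · exact hx n hxp
    · have := hpx.length_le
      rw [hlen] at this
      omega
  · intro hyx
    have := (hy.trans hyx).length_le
    rw [hlen] at this
    omega

theorem exists_infinite_isAntichain_of_forall_not_prefix (hlen : ∀ n, (p n).length = n)
    {S : Set (List α)} (h : ∀ n, ∃ x ∈ S, p n <+: x ∧ ∀ m, ¬ x <+: p m) :
    ∃ A ⊆ S, A.Infinite ∧ IsAntichain (· <+: ·) A := by
  choose f hfS hpf hf using h
  let φ (k : ℕ) : ℕ := (fun n => (f n).length + 1)^[k] 0
  have hφ (k : ℕ) : φ (k + 1) = (f (φ k)).length + 1 := Function.iterate_succ_apply' _ _ _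
  have hφmono : StrictMono φ := strictMono_nat_of_lt_succ fun k => by
    have := (hpf (φ k)).length_le
    rw [hlen] at this
    rw [hφ]
    omega
  have hinc (j k : ℕ) (hjk : j < k) : ¬ f (φ j) <+: f (φ k) ∧ ¬ f (φ k) <+: f (φ j) := by
    refine not_prefix_and_not_prefix_of_forall_not_prefix hlen (hf _) (hpf _) ?_
    have := hφmono.monotone (Nat.succ_le_of_lt hjk)
    rw [hφ] at this
    omega
  have hne (j k : ℕ) (hjk : j ≠ k) : ¬ f (φ j) <+: f (φ k) := by
    rcases hjk.lt_or_gt with hlt | hgt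
    · exact (hinc j k hlt).1
    · exact (hinc k j hgt).2
  refine ⟨range (f ∘ φ), range_subset_iff.2 fun k => hfS _, ?_, ?_⟩
  · refine infinite_range_of_injective fun j k hjk => ?_
    by_contra hjk'
    exact hne j k hjk' (by rw [show f (φ j) = f (φ k) from hjk])
  · rintro _ ⟨j, rfl⟩ _ ⟨k, rfl⟩ hjk
    exact hne j k fun h => hjk (h ▸ rfl)

end Branch

theorem HasLargeAntichains.exists_infinite_isAntichain [Fintype α] {S : Set (List α)}
    (h : HasLargeAntichains S) : ∃ A ⊆ S, A.Infinite ∧ IsAntichain (· <+: ·) A := by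
  obtain ⟨p, hlen, hmono, hp⟩ := h.exists_branch
  refine exists_infinite_isAntichain_of_forall_not_prefix hlen fun n => ?_
  obtain ⟨x, ⟨hxS, hpx⟩, hx⟩ := (hp n).exists_forall_not_prefix hmono
  exact ⟨x, hxS, hpx, hx⟩

theorem isAnti_iff_isAntichain {A : Set (List Bool)} : IsAnti A ↔ IsAntichain (· <+: ·) A :=
  ⟨fun h _ hx _ hy hxy => (h _ hx _ hy hxy).1,
    fun h _ hx _ hy hxy => ⟨h hx hy hxy, h hy hx hxy.symm⟩⟩

/-- `B` has no infinite antichain iff there is a bound `k` on the cardinality of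
antichains contained in `B`. -/
theorem no_infAnti_iff_bounded (B : Set (List Bool)) :
    ¬ HasInfAnti B ↔
      ∃ k : ℕ, 1 ≤ k ∧ ∀ A : Set (List Bool), A ⊆ B → IsAnti A →
        A.Finite ∧ A.ncard ≤ k := by
  constructor
  · intro hno
    by_contra! hlarge
    have hfin (A : Set (List Bool)) (hAB : A ⊆ B) (hA : IsAnti A) : A.Finite :=
      not_infinite.1 fun hinf => hno ⟨A, hAB, hinf, hA⟩
    have hB : HasLargeAntichains B := fun n => by
      obtain ⟨A, hAB, hA, hcard⟩ := hlarge (n + 1) n.succ_pos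
      have hAfin := hfin A hAB hA
      refine ⟨hAfin.toFinset, by simpa using hAB, by simpa [isAnti_iff_isAntichain] using hA, ?_⟩
      have := hcard hAfin
      rw [ncard_eq_toFinset_card A hAfin] at this
      omega
    obtain ⟨A, hAB, hinf, hA⟩ := hB.exists_infinite_isAntichain
    exact hno ⟨A, hAB, hinf, isAnti_iff_isAntichain.2 hA⟩
  · rintro ⟨k, -, hbound⟩ ⟨A, hAB, hinf, hA⟩
    exact hinf (hbound A hAB hA).1
end

section
/- Fix a bijection f : {l,r}* → ℕ. The image under f of the ideal I = { B ⊆ {l,r}* : B has no infinite antichain } is an F_σ subset of the Cantor space P(ℕ) ≅ {0,1}^ℕ. -/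
def Incomp (u v : List Bool) : Prop := ¬ u <+: v ∧ ¬ v <+: u

lemma Incomp.of_prefix_right {u v v' : List Bool} (h : Incomp u v) (hv : v <+: v') :
    Incomp u v' :=
  ⟨fun hu => (List.prefix_or_prefix_of_prefix hu hv).elim h.1 h.2,
    fun hv' => h.2 (hv.trans hv')⟩

lemma prefix_of_not_incomp_of_length_lt {u v : List Bool} (h : ¬ Incomp u v)
    (hlen : u.length < v.length) : u <+: v := by
  by_contra hu
  exact h ⟨hu, fun hv => (hlen.trans_le hv.length_le).false⟩

lemma IsAnti.mono {A A' : Set (List Bool)} (hA : IsAnti A') (h : A ⊆ A') : IsAnti A :=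
  fun x hx y hy hxy => hA x (h hx) y (h hy) hxy

lemma setOf_prefix_subset (t : List Bool) :
    {w | t <+: w} ⊆ insert t ({w | t ++ [false] <+: w} ∪ {w | t ++ [true] <+: w}) := by
  rintro _ ⟨s, rfl⟩
  match s with
  | [] => simp
  | false :: s => exact Or.inr (Or.inl ⟨s, by simp⟩)
  | true :: s => exact Or.inr (Or.inr ⟨s, by simp⟩)

def LargeAntichains (S : Set (List Bool)) : Prop :=
  ∀ n, ∃ F : Finset (List Bool), ↑F ⊆ S ∧ IsAnti ↑F ∧ n ≤ F.card

section LargeAntichains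

variable {S T B : Set (List Bool)}

lemma not_largeAntichains_iff :
    ¬ LargeAntichains S ↔
      ∃ n, ∀ F : Finset (List Bool), ↑F ⊆ S → IsAnti ↑F → F.card < n := by
  simp only [LargeAntichains, not_forall, not_exists, not_and, not_le]

lemma LargeAntichains.mono (h : LargeAntichains S) (hST : S ⊆ T) : LargeAntichains T := fun n =>
  let ⟨F, hFS, hF, hn⟩ := h n
  ⟨F, hFS.trans hST, hF, hn⟩

lemma not_largeAntichains_of_finite (hS : S.Finite) : ¬ LargeAntichains S := by
  refine not_largeAntichains_iff.2 ⟨hS.toFinset.card + 1, fun F hFS _ => ?_⟩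
  exact Nat.lt_succ_of_le (Finset.card_le_card (by simpa using hFS))

lemma LargeAntichains.of_union (h : LargeAntichains (S ∪ T)) :
    LargeAntichains S ∨ LargeAntichains T := by
  classical
  by_contra! hST
  obtain ⟨m, hm⟩ := not_largeAntichains_iff.1 hST.1
  obtain ⟨k, hk⟩ := not_largeAntichains_iff.1 hST.2
  obtain ⟨F, hFST, hF, hcard⟩ := h (m + k)
  have hS : (F.filter (· ∈ S)).card < m :=
    hm _ (fun w hw => (Finset.mem_filter.1 hw).2) (hF.mono fun w hw => (Finset.mem_filter.1 hw).1)
  have hT : (F.filter (· ∈ T)).card < k :=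
    hk _ (fun w hw => (Finset.mem_filter.1 hw).2) (hF.mono fun w hw => (Finset.mem_filter.1 hw).1)
  have hcover : F ⊆ F.filter (· ∈ S) ∪ F.filter (· ∈ T) := fun w hw => by
    simpa [hw] using hFST hw
  have := (Finset.card_le_card hcover).trans (Finset.card_union_le _ _)
  omega

lemma LargeAntichains.exists_child {t : List Bool} (h : LargeAntichains (B ∩ {w | t <+: w})) :
    ∃ a : Bool, LargeAntichains (B ∩ {w | t ++ [a] <+: w}) := by
  have hsub : B ∩ {w | t <+: w} ⊆
      {t} ∪ (B ∩ {w | t ++ [false] <+: w} ∪ B ∩ {w | t ++ [true] <+: w}) := by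
    rintro w ⟨hwB, hw⟩
    rcases setOf_prefix_subset t hw with rfl | hw | hw
    · exact Or.inl rfl
    · exact Or.inr (Or.inl ⟨hwB, hw⟩)
    · exact Or.inr (Or.inr ⟨hwB, hw⟩)
  rcases (h.mono hsub).of_union with ht | hchild
  · exact absurd ht (not_largeAntichains_of_finite (Set.finite_singleton t))
  · exact hchild.of_union.elim (⟨false, ·⟩) (⟨true, ·⟩)

lemma LargeAntichains.exists_extension {t : List Bool} (h : LargeAntichains (B ∩ {w | t <+: w}))
    (k : ℕ) :
    ∃ t', t <+: t' ∧ t'.length = t.length + k ∧ LargeAntichains (B ∩ {w | t' <+: w}) := by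
  induction k with
  | zero => exact ⟨t, List.prefix_rfl, rfl, h⟩
  | succ k ih =>
    obtain ⟨t', htt', hlen, ht'⟩ := ih
    obtain ⟨a, ha⟩ := ht'.exists_child
    exact ⟨t' ++ [a], htt'.trans (List.prefix_append _ _), by simp [hlen]; omega, ha⟩

/-- Two incomparable elements of `B` above `t` cannot both be prefixes of a node extending `t`
that is longer than both of them. -/
lemma LargeAntichains.exists_incomp {t : List Bool} (h : LargeAntichains (B ∩ {w | t <+: w})) :
    ∃ t' b, t <+: t' ∧ LargeAntichains (B ∩ {w | t' <+: w}) ∧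
      b ∈ B ∧ t <+: b ∧ Incomp b t' := by
  obtain ⟨F, hFB, hF, hcard⟩ := h 2
  obtain ⟨u, hu, v, hv, huv⟩ := Finset.one_lt_card.1 hcard
  obtain ⟨hub, htu⟩ := hFB hu
  obtain ⟨hvb, htv⟩ := hFB hv
  obtain ⟨t', htt', hlen, ht'⟩ := h.exists_extension (u.length + v.length + 1)
  by_cases hu' : Incomp u t'
  · exact ⟨t', u, htt', ht', hub, htu, hu'⟩
  by_cases hv' : Incomp v t'
  · exact ⟨t', v, htt', ht', hvb, htv, hv'⟩
  have hut' := prefix_of_not_incomp_of_length_lt hu' (by omega)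
  have hvt' := prefix_of_not_incomp_of_length_lt hv' (by omega)
  have huv' := hF u hu v hv huv
  exact absurd (List.prefix_or_prefix_of_prefix hut' hvt') (not_or.2 huv')

lemma LargeAntichains.hasInfAnti (h : LargeAntichains B) : HasInfAnti B := by
  have hstep (t : {t // LargeAntichains (B ∩ {w | t <+: w})}) :
      ∃ t' : {t // LargeAntichains (B ∩ {w | t <+: w})}, ∃ b,
        t.1 <+: t'.1 ∧ b ∈ B ∧ t.1 <+: b ∧ Incomp b t'.1 :=
    let ⟨t', b, htt', ht', hb⟩ := t.2.exists_incomp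
    ⟨⟨t', ht'⟩, b, htt', hb⟩
  choose next b hnext hbB htb hinc using hstep
  let path (n : ℕ) := next^[n] ⟨[], by simpa using h⟩
  have hpath_succ (n : ℕ) : path (n + 1) = next (path n) := Function.iterate_succ_apply' _ _ _
  have hpath (n : ℕ) : (path n).1 <+: (path (n + 1)).1 := hpath_succ n ▸ hnext _
  have hlt {i j : ℕ} (hij : i < j) : Incomp (b (path i)) (b (path j)) := by
    refine (hinc (path i)).of_prefix_right ?_
    rw [← hpath_succ]
    exact (Nat.rel_of_forall_rel_succ_of_le (· <+: ·) hpath hij).trans (htb _)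
  have hne {i j : ℕ} (hij : i ≠ j) : Incomp (b (path i)) (b (path j)) :=
    hij.lt_or_gt.elim hlt fun hji => ⟨(hlt hji).2, (hlt hji).1⟩
  have hinj : Function.Injective (b ∘ path) := fun i j hij => by
    by_contra hij'
    exact (hne hij').1 (by rw [show b (path i) = b (path j) from hij])
  refine ⟨Set.range (b ∘ path), Set.range_subset_iff.2 fun n => hbB _,
    Set.infinite_range_of_injective hinj, ?_⟩
  rintro _ ⟨i, rfl⟩ _ ⟨j, rfl⟩ hij
  exact hne fun h => hij (congrArg _ h)

lemma hasInfAnti_iff_largeAntichains : HasInfAnti B ↔ LargeAntichains B := by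
  refine ⟨fun ⟨A, hAB, hA, hanti⟩ n => ?_, LargeAntichains.hasInfAnti⟩
  obtain ⟨F, hFA, hcard⟩ := hA.exists_subset_card_eq n
  exact ⟨F, hFA.trans hAB, hanti.mono hFA, hcard.ge⟩

end LargeAntichains

lemma isOpen_setOf_finset_subset_preimage {α ι : Type*} (g : α → ι) (F : Finset α) :
    IsOpen {x : ι → Bool | ↑F ⊆ {a | x (g a) = true}} := by
  have : {x : ι → Bool | ↑F ⊆ {a | x (g a) = true}} =
      ⋂ a ∈ F, (fun x => x (g a)) ⁻¹' {true} := by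
    ext; simp [Set.subset_def]
  rw [this]
  exact isOpen_biInter_finset fun a _ => (isOpen_discrete _).preimage (continuous_apply _)

lemma isClosed_setOf_forall_finset_card_lt {α ι : Type*} (g : α → ι) (P : Finset α → Prop)
    (n : ℕ) :
    IsClosed
      {x : ι → Bool | ∀ F : Finset α, ↑F ⊆ {a | x (g a) = true} → P F → F.card < n} := by
  simp only [Set.ofPred_forall]
  exact isClosed_iInter fun F =>
    isClosed_imp (isOpen_setOf_finset_subset_preimage g F) isClosed_const

/-- Given a bijection `f : {l,r}* → ℕ`, the image under `f` of the ideal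
`I = { B : B has no infinite antichain }`, viewed in the Cantor space `ℕ → Bool`,
is an `F_σ` set. -/
theorem image_I_Fsigma (f : List Bool ≃ ℕ) :
    ∃ C : ℕ → Set (ℕ → Bool), (∀ n, IsClosed (C n)) ∧
      {x : ℕ → Bool | ¬ HasInfAnti {w : List Bool | x (f w) = true}} = ⋃ n, C n := by
  refine ⟨fun n => {x | ∀ F : Finset (List Bool), ↑F ⊆ {w | x (f w) = true} → IsAnti ↑F →
    F.card < n}, fun n => isClosed_setOf_forall_finset_card_lt f _ n, ?_⟩
  ext x
  simp only [Set.mem_ofPred_eq, Set.mem_iUnion, hasInfAnti_iff_largeAntichains,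
    not_largeAntichains_iff]
end

section
/- The ideal J = f(I), the image under a fixed bijection f : {l,r}* → ℕ of the ideal of subsets of {l,r}* without infinite antichains, is not a trivial modification of Fin: there is no infinite set B ⊆ ℕ such that J = { A ⊆ ℕ : A ∩ B is finite }. -/
/-!
Inside `{l,r}*` consider the comb of chains `lⁿ r lᵏ` (`k ∈ ℕ`), one for each `n`; words on
different chains are incomparable. If `J` were `{A : A ∩ B finite}`, then `C = f⁻¹(B)` would meet
every set without infinite antichains in a finite set. Either some chain of the comb lies
inside `C`, an infinite subset of `C` without infinite antichains, or every chain has an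
element outside `C`, and these elements form an infinite antichain disjoint from `C`.
-/

open List Set

/-- The word `lⁿ r lᵏ`, with `l = false` and `r = true`. -/
def combWord (n k : ℕ) : List Bool :=
  replicate n false ++ true :: replicate k false

lemma eq_of_replicate_false_append_true_eq {n m : ℕ} {x y : List Bool}
    (h : replicate n false ++ true :: x = replicate m false ++ true :: y) : n = m := by
  induction n generalizing m <;> cases m <;> simp_all [replicate_succ]

lemma eq_of_combWord_prefix {n m k l : ℕ} (h : combWord n k <+: combWord m l) : n = m := by
  obtain ⟨t, ht⟩ := h
  simp only [combWord, append_assoc, cons_append] at ht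
  exact eq_of_replicate_false_append_true_eq ht

lemma combWord_prefix_of_le (n : ℕ) {k l : ℕ} (hkl : k ≤ l) : combWord n k <+: combWord n l :=
  ⟨replicate (l - k) false, by simp [combWord, Nat.add_sub_cancel' hkl]⟩

lemma combWord_injective (n : ℕ) : Function.Injective (combWord n) := fun k l h => by
  simpa [combWord] using congrArg length h

lemma isChain_range_combWord (n : ℕ) : IsChain (· <+: ·) (range (combWord n)) := by
  rintro _ ⟨k, rfl⟩ _ ⟨l, rfl⟩ -
  rcases le_total k l with hkl | hlk
  · exact .inl (combWord_prefix_of_le n hkl)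
  · exact .inr (combWord_prefix_of_le n hlk)

lemma isAnti_range_combWord (k : ℕ → ℕ) : IsAnti (range fun n => combWord n (k n)) := by
  rintro _ ⟨n, rfl⟩ _ ⟨m, rfl⟩ hne
  have hnm : n ≠ m := fun h => hne (h ▸ rfl)
  exact ⟨fun h => hnm (eq_of_combWord_prefix h), fun h => hnm (eq_of_combWord_prefix h).symm⟩

lemma IsAnti.subsingleton_of_isChain {A S : Set (List Bool)} (hA : IsAnti A) (hAS : A ⊆ S)
    (hS : IsChain (· <+: ·) S) : A.Subsingleton := by
  intro x hx y hy
  by_contra hxy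
  rcases hS (hAS hx) (hAS hy) hxy with h | h
  · exact (hA x hx y hy hxy).1 h
  · exact (hA x hx y hy hxy).2 h

lemma not_hasInfAnti_of_isChain {S : Set (List Bool)} (hS : IsChain (· <+: ·) S) :
    ¬ HasInfAnti S := fun ⟨_, hAS, hAinf, hA⟩ =>
  hAinf (hA.subsingleton_of_isChain hAS hS).finite

lemma exists_infinite_chain_subset_or_hasInfAnti_disjoint (C : Set (List Bool)) :
    (∃ A ⊆ C, A.Infinite ∧ ¬ HasInfAnti A) ∨ ∃ A, HasInfAnti A ∧ Disjoint A C := by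
  by_cases hcomb : ∃ n, range (combWord n) ⊆ C
  · obtain ⟨n, hn⟩ := hcomb
    exact .inl ⟨_, hn, infinite_range_of_injective (combWord_injective n),
      not_hasInfAnti_of_isChain (isChain_range_combWord n)⟩
  · simp only [range_subset_iff, not_exists, not_forall] at hcomb
    choose k hk using hcomb
    have hinj : Function.Injective fun n => combWord n (k n) := fun n m h =>
      eq_of_combWord_prefix ⟨[], by simpa using h⟩
    refine .inr ⟨_, ⟨_, subset_rfl, infinite_range_of_injective hinj, isAnti_range_combWord k⟩,
      Set.disjoint_left.mpr ?_⟩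
    rintro _ ⟨n, rfl⟩
    exact hk n

/-- The ideal `J = f(I)` (where `A ∈ J` iff `f⁻¹(A)` has no infinite antichain) is not
a trivial modification of `Fin`: there is no infinite `B ⊆ ℕ` with
`J = { A ⊆ ℕ : A ∩ B finite }`. -/
theorem image_I_not_trivial_modification (f : List Bool ≃ ℕ) :
    ¬ ∃ B : Set ℕ, B.Infinite ∧
      ∀ A : Set ℕ, (¬ HasInfAnti ((fun w => f w) ⁻¹' A)) ↔ (A ∩ B).Finite := by
  rintro ⟨B, -, hB⟩
  have hC : ∀ A, ¬ HasInfAnti A ↔ (A ∩ f ⁻¹' B).Finite := fun A => by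
    have := hB (f '' A)
    rwa [preimage_image_eq _ f.injective, ← image_inter_preimage,
      finite_image_iff f.injective.injOn] at this
  rcases exists_infinite_chain_subset_or_hasInfAnti_disjoint (f ⁻¹' B) with
    ⟨A, hAC, hAinf, hA⟩ | ⟨A, hA, hdisj⟩
  · exact hAinf (by simpa [inter_eq_left.mpr hAC] using (hC A).1 hA)
  · exact (hC A).mpr (by simp [hdisj.inter_eq]) hA
end
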